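/- In the regular hexagonal tiling of the plane with edge length 1, every closed disk of radius r < 1/2 intersects at most three tiles: for every p ∈ ℝ² and every r with 0 ≤ r < 1/2, the number of pairs (m, n) ∈ ℤ² such that the tile H_{m,n} intersects closedBall(p, r) is at most three. -/
import Mathlib


open Metric Set

/-- The point `(x, y)` in the Euclidean plane. -/
noncomputable def pt (x y : ℝ) : EuclideanSpace ℝ (Fin 2) :=
  (WithLp.equiv 2 (Fin 2 → ℝ)).symm ![x, y]

/-- The closed regular hexagon with edge length 1 centered at the origin. -/
noncomputable def hexagon : Set (EuclideanSpace ℝ (Fin 2)) :=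
  convexHull ℝ
    {pt 1 0, pt (1 / 2) (Real.sqrt 3 / 2), pt (-(1 / 2)) (Real.sqrt 3 / 2), pt (-1) 0,
      pt (-(1 / 2)) (-(Real.sqrt 3 / 2)), pt (1 / 2) (-(Real.sqrt 3 / 2))}

/-- The tile `H_{m,n} = H + m·(3/2, √3/2) + n·(0, √3)` of the regular hexagonal tiling. -/
noncomputable def hexTile (m n : ℤ) : Set (EuclideanSpace ℝ (Fin 2)) :=
  (fun x => x + (m : ℝ) • pt (3 / 2) (Real.sqrt 3 / 2) + (n : ℝ) • pt 0 (Real.sqrt 3)) ''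
    hexagon

lemma sqrt3_sq : Real.sqrt 3 ^ 2 = 3 := Real.sq_sqrt (by norm_num)

lemma normsq (v : EuclideanSpace ℝ (Fin 2)) : ‖v‖^2 = v 0 ^2 + v 1 ^2 := by
  rw [EuclideanSpace.norm_eq, Real.sq_sqrt (by positivity)]
  simp [Fin.sum_univ_two, sq_abs]

lemma pt_apply0 (x y : ℝ) : pt x y 0 = x := rfl
lemma pt_apply1 (x y : ℝ) : pt x y 1 = y := rfl

lemma comb_apply (a b x y x' y' : ℝ) (i : Fin 2) :
    (a • pt x y + b • pt x' y') i = a * (pt x y i) + b * (pt x' y' i) := rfl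

lemma center_normsq (a b : ℝ) :
    ‖a • pt (3/2) (Real.sqrt 3/2) + b • pt 0 (Real.sqrt 3)‖^2 = 3*(a^2+a*b+b^2) := by
  rw [normsq, comb_apply, comb_apply, pt_apply0, pt_apply0, pt_apply1, pt_apply1]
  linear_combination ((a/2+b)^2) * sqrt3_sq

lemma pt_norm_le (x y : ℝ) (h : x^2 + y^2 ≤ 1) : ‖pt x y‖ ≤ 1 := by
  have h2 : ‖pt x y‖^2 ≤ 1 := by rw [normsq, pt_apply0, pt_apply1]; linarith
  nlinarith [norm_nonneg (pt x y)]

lemma hex_norm {x : EuclideanSpace ℝ (Fin 2)} (hx : x ∈ hexagon) : ‖x‖ ≤ 1 := by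
  have hsub : hexagon ⊆ Metric.closedBall 0 1 := by
    apply convexHull_min ?_ (convex_closedBall 0 1)
    intro v hv
    simp only [Set.mem_insert_iff, Set.mem_singleton_iff] at hv
    have key : ∀ a b : ℝ, a^2 + b^2 ≤ 1 → pt a b ∈ Metric.closedBall (0 : EuclideanSpace ℝ (Fin 2)) 1 := by
      intro a b hab
      rw [Metric.mem_closedBall, dist_zero_right]
      exact pt_norm_le a b hab
    rcases hv with rfl|rfl|rfl|rfl|rfl|rfl <;>
      exact key _ _ (by nlinarith [sqrt3_sq])
  have := hsub hx
  rwa [Metric.mem_closedBall, dist_zero_right] at this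

lemma quad_cases (x y : ℤ) (h2 : x^2 + x*y + y^2 ≤ 2) (h0 : ¬(x = 0 ∧ y = 0)) :
    (x=1∧y=0)∨(x=-1∧y=0)∨(x=0∧y=1)∨(x=0∧y=-1)∨(x=1∧y=-1)∨(x=-1∧y=1) := by
  have b1 : 2*x ≤ 3 := by nlinarith [sq_nonneg (x-1), sq_nonneg (x+2*y)]
  have b2 : -3 ≤ 2*x := by nlinarith [sq_nonneg (x+1), sq_nonneg (x+2*y)]
  have b3 : 2*y ≤ 3 := by nlinarith [sq_nonneg (y-1), sq_nonneg (2*x+y)]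
  have b4 : -3 ≤ 2*y := by nlinarith [sq_nonneg (y+1), sq_nonneg (2*x+y)]
  have hx : -1 ≤ x ∧ x ≤ 1 := by omega
  have hy : -1 ≤ y ∧ y ≤ 1 := by omega
  obtain ⟨hx1, hx2⟩ := hx; obtain ⟨hy1, hy2⟩ := hy
  interval_cases x <;> interval_cases y <;> simp_all

lemma pair_move {p : EuclideanSpace ℝ (Fin 2)} {r : ℝ} (hr0 : 0 ≤ r) (hr : r < 1/2)
    {m n m' n' : ℤ}
    (h1 : (hexTile m n ∩ closedBall p r).Nonempty)
    (h2 : (hexTile m' n' ∩ closedBall p r).Nonempty)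
    (hne : ¬(m = m' ∧ n = n')) :
    (m-m'=1∧n-n'=0)∨(m-m'=-1∧n-n'=0)∨(m-m'=0∧n-n'=1)∨(m-m'=0∧n-n'=-1)∨
      (m-m'=1∧n-n'=-1)∨(m-m'=-1∧n-n'=1) := by
  obtain ⟨x, hx, hxb⟩ := h1
  obtain ⟨t, ht, rfl⟩ := hx
  obtain ⟨x', hx', hx'b⟩ := h2
  obtain ⟨t', ht', rfl⟩ := hx'
  set u := pt (3/2) (Real.sqrt 3/2) with hu
  set v := pt 0 (Real.sqrt 3) with hv
  rw [Metric.mem_closedBall] at hxb hx'b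
  have hdd : dist (t + (m:ℝ) • u + (n:ℝ) • v) (t' + (m':ℝ) • u + (n':ℝ) • v) ≤ 2*r := by
    calc dist (t + (m:ℝ) • u + (n:ℝ) • v) (t' + (m':ℝ) • u + (n':ℝ) • v)
        ≤ dist (t + (m:ℝ) • u + (n:ℝ) • v) p + dist p (t' + (m':ℝ) • u + (n':ℝ) • v) :=
          dist_triangle _ _ _
      _ ≤ r + r := add_le_add hxb (by rw [dist_comm]; exact hx'b)
      _ = 2*r := by ring
  have hid : ((m:ℝ)-(m':ℝ)) • u + ((n:ℝ)-(n':ℝ)) • v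
      = ((t + (m:ℝ) • u + (n:ℝ) • v) - (t' + (m':ℝ) • u + (n':ℝ) • v)) + (t' - t) := by
    rw [sub_smul, sub_smul]; abel
  have hc : ‖((m:ℝ)-(m':ℝ)) • u + ((n:ℝ)-(n':ℝ)) • v‖ ≤ 2*r + 2 := by
    rw [hid]
    calc ‖_ + (t' - t)‖ ≤ ‖(t + (m:ℝ) • u + (n:ℝ) • v) - (t' + (m':ℝ) • u + (n':ℝ) • v)‖
          + ‖t' - t‖ := norm_add_le _ _
      _ ≤ 2*r + (‖t'‖ + ‖t‖) := by
          refine add_le_add ?_ (norm_sub_le _ _)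
          rw [← dist_eq_norm]; exact hdd
      _ ≤ 2*r + 2 := by
          have := hex_norm ht; have := hex_norm ht'; linarith
  have hsq : 3*(((m:ℝ)-(m':ℝ))^2 + ((m:ℝ)-(m':ℝ))*((n:ℝ)-(n':ℝ)) + ((n:ℝ)-(n':ℝ))^2)
      ≤ (2*r+2)^2 := by
    rw [← center_normsq]
    have h0 : (0:ℝ) ≤ 2*r+2 := by linarith
    nlinarith [norm_nonneg (((m:ℝ)-(m':ℝ)) • u + ((n:ℝ)-(n':ℝ)) • v)]
  have hlt : (((m-m')^2 + (m-m')*(n-n') + (n-n')^2 : ℤ) : ℝ) < 3 := by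
    push_cast
    nlinarith
  have hZ : ((m-m')^2 + (m-m')*(n-n') + (n-n')^2 : ℤ) ≤ 2 := by
    have : ((m-m')^2 + (m-m')*(n-n') + (n-n')^2 : ℤ) < 3 := by exact_mod_cast hlt
    omega
  exact quad_cases _ _ hZ (by omega)

/-- Every closed disk of radius `r < 1/2` intersects at most three tiles of the regular
hexagonal tiling with edge length 1. -/
theorem hexagonal_tiling_disk_meets_at_most_three_tiles
    (p : EuclideanSpace ℝ (Fin 2)) (r : ℝ) (hr0 : 0 ≤ r) (hr : r < 1 / 2) :
    {q : ℤ × ℤ | (hexTile q.1 q.2 ∩ closedBall p r).Nonempty}.encard ≤ 3 := by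
  set S := {q : ℤ × ℤ | (hexTile q.1 q.2 ∩ closedBall p r).Nonempty} with hS
  by_contra hcon
  push_neg at hcon
  have h4 : (4 : ℕ∞) ≤ S.encard := Order.add_one_le_of_lt hcon
  obtain ⟨t, hts, ht4⟩ := Set.exists_subset_encard_eq h4
  obtain ⟨a, ha⟩ := Set.nonempty_of_encard_ne_zero (s := t) (by rw [ht4]; norm_num)
  have h3 : (t \ {a}).encard = 3 := by
    rw [Set.encard_diff_singleton_of_mem ha, ht4]; rfl
  obtain ⟨b, c, d, hbc, hbd, hcd, hset⟩ := Set.encard_eq_three.mp h3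
  have hb : b ∈ t \ {a} := by rw [hset]; exact Or.inl rfl
  have hc : c ∈ t \ {a} := by rw [hset]; exact Or.inr (Or.inl rfl)
  have hd : d ∈ t \ {a} := by rw [hset]; exact Or.inr (Or.inr rfl)
  have haS : a ∈ S := hts ha
  have hbS : b ∈ S := hts hb.1
  have hcS : c ∈ S := hts hc.1
  have hdS : d ∈ S := hts hd.1
  have hab : a ≠ b := fun h => hb.2 h.symm
  have hac : a ≠ c := fun h => hc.2 h.symm
  have had : a ≠ d := fun h => hd.2 h.symm
  obtain ⟨a1, a2⟩ := a
  obtain ⟨b1, b2⟩ := b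
  obtain ⟨c1, c2⟩ := c
  obtain ⟨d1, d2⟩ := d
  have Hab := pair_move hr0 hr haS hbS (by rintro ⟨h1, h2⟩; exact hab (Prod.ext h1 h2))
  have Hac := pair_move hr0 hr haS hcS (by rintro ⟨h1, h2⟩; exact hac (Prod.ext h1 h2))
  have Had := pair_move hr0 hr haS hdS (by rintro ⟨h1, h2⟩; exact had (Prod.ext h1 h2))
  have Hbc := pair_move hr0 hr hbS hcS (by rintro ⟨h1, h2⟩; exact hbc (Prod.ext h1 h2))
  have Hbd := pair_move hr0 hr hbS hdS (by rintro ⟨h1, h2⟩; exact hbd (Prod.ext h1 h2))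
  have Hcd := pair_move hr0 hr hcS hdS (by rintro ⟨h1, h2⟩; exact hcd (Prod.ext h1 h2))
  omega
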